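/- Let K be a field, A an associative unital K-algebra and E a projective right A-module with dual basis {e_i}_{i∈I} ⊆ E and {ε^i}_{i∈I} ⊆ Hom_A(E,A), so that each e ∈ E satisfies e = Σ_{i∈I} e_i · ε^i(e) with only finitely many ε^i(e) nonzero. For k ≥ 1 define h^k : HC^k(A, End_K(E)) → HC^{k−1}(A, End_K(E)) by (h^k φ)(a_1,…,a_{k−1})(e) = Σ_{i∈I} φ(ε^i(e), a_1, …, a_{k−1})(e_i), and set h^0 = 0. Then δ^{k−1} ∘ h^k + h^{k+1} ∘ δ^k = id on HC^k(A, End_K(E)) for all k ≥ 1. Consequently every Hochschild k-cocycle φ (δφ = 0, k ≥ 1) is the coboundary φ = δ(h^k φ), i.e. HH^k(A, End_K(E)) = 0 for all k ≥ 1. -/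

import Mathlib

/-!
Fix `a` and `e`, and let `s` be the finite support of `i ↦ εⁱ(e)`; by right `A`-linearity of the
`εⁱ` it also contains the support of `i ↦ εⁱ(e · a₀)`, so every value of `hφ` occurring in
`δ(hφ)(a)(e)` is a sum over `s`. The `i`-th summand of `δ(hφ)(a)(e)` and that of `h(δφ)(a)(e)`
then cancel except for the first face `φ(a)(eᵢ · εⁱ(e))` of `δφ`, and these sum to `φ(a)(e)`
by the dual basis property.
-/

namespace Stmt14

variable {K : Type*} [Field K] {A : Type*} [Ring A] [Algebra K A]
variable {E : Type*} [AddCommGroup E] [Module K E] [Module Aᵐᵒᵖ E]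
variable {ι : Type*}

/-- The Hochschild differential of a `k`-cochain with values in endomorphisms of the right
`A`-module `E` (the right action being `e · a = op a • e`):
`(δφ)(a_1,…,a_{k+1})(e) = φ(a_2,…,a_{k+1})(e·a_1)
  + ∑_{i=1}^{k} (−1)^i φ(a_1,…,a_i a_{i+1},…,a_{k+1})(e)
  + (−1)^{k+1} φ(a_1,…,a_k)(e)·a_{k+1}`. -/
def hdelM (k : ℕ) (φ : (Fin k → A) → E → E) : (Fin (k+1) → A) → E → E :=
  fun b e =>
    φ (fun j => b j.succ) (MulOpposite.op (b 0) • e)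
      + (∑ i : Fin k, ((-1 : ℤ) ^ ((i : ℕ) + 1)) • φ (fun j =>
          if _h1 : (j : ℕ) < (i : ℕ) then b ⟨(j : ℕ), by have := j.isLt; omega⟩
          else if _h2 : (j : ℕ) = (i : ℕ) then
            b ⟨(i : ℕ), by have := i.isLt; omega⟩ * b ⟨(i : ℕ) + 1, by have := i.isLt; omega⟩
          else b ⟨(j : ℕ) + 1, by have := j.isLt; omega⟩) e)
      + ((-1 : ℤ) ^ (k + 1)) •
          (MulOpposite.op (b (Fin.last k)) • φ (fun j => b j.castSucc) e)

/-- The homotopy `h` built from a dual basis `{e_i}`, `{ε^i}` of a projective right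
`A`-module: `(hφ)(a_1,…,a_k)(e) = ∑_i φ(ε^i(e), a_1, …, a_k)(e_i)`. -/
noncomputable def homM (eb : ι → E) (ε : ι → (E →ₗ[K] A)) (k : ℕ)
    (φ : (Fin (k+1) → A) → E → E) : (Fin k → A) → E → E :=
  fun a e => ∑ᶠ i, φ (Fin.cons (ε i e) a) (eb i)

open MulOpposite

theorem hdelM_apply {k : ℕ} (φ : (Fin k → A) → E → E) (b : Fin (k+1) → A) (e : E) :
    hdelM k φ b e = φ (Fin.tail b) (op (b 0) • e)
      + ∑ i : Fin k, ((-1 : ℤ) ^ ((i : ℕ) + 1)) • φ (Fin.contractNth i.castSucc (· * ·) b) e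
      + ((-1 : ℤ) ^ (k + 1)) • (op (b (Fin.last k)) • φ (Fin.init b) e) := by
  have merge (i : Fin k) : (fun j : Fin k =>
      if _ : (j : ℕ) < (i : ℕ) then b ⟨(j : ℕ), by omega⟩
      else if _ : (j : ℕ) = (i : ℕ) then b ⟨(i : ℕ), by omega⟩ * b ⟨(i : ℕ) + 1, by omega⟩
      else b ⟨(j : ℕ) + 1, by omega⟩) = Fin.contractNth i.castSucc (· * ·) b := by
    funext j
    simp only [Fin.contractNth, Fin.val_castSucc, dite_eq_ite]
    split_ifs with hlt heq
    · rfl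
    · obtain rfl : j = i := Fin.ext heq
      rfl
    · rfl
  simp only [hdelM, merge]
  rfl

theorem contractNth_cons_zero {α : Type*} {n : ℕ} (op : α → α → α) (c : α)
    (a : Fin (n+1) → α) :
    Fin.contractNth 0 op (Fin.cons c a) = Fin.cons (op c (a 0)) (Fin.tail a) := by
  funext j
  cases j using Fin.cases <;> simp [Fin.contractNth, Fin.tail]

theorem contractNth_cons_succ {α : Type*} {n : ℕ} (j : Fin (n+1)) (op : α → α → α) (c : α)
    (a : Fin (n+1) → α) :
    Fin.contractNth j.succ op (Fin.cons c a) = Fin.cons c (Fin.contractNth j op a) := by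
  funext i
  cases i using Fin.cases <;> simp [Fin.contractNth]

theorem init_cons {α : Type*} {n : ℕ} (c : α) (a : Fin (n+1) → α) :
    Fin.init (Fin.cons c a : Fin (n+2) → α) = Fin.cons c (Fin.init a) := by
  funext j
  cases j using Fin.cases <;> rfl

theorem hdelM_cons {k : ℕ} (φ : (Fin (k+1) → A) → E → E) (c : A) (a : Fin (k+1) → A) (x : E) :
    hdelM (k+1) φ (Fin.cons c a) x = φ a (op c • x) - φ (Fin.cons (c * a 0) (Fin.tail a)) x
      - ∑ t : Fin k, ((-1 : ℤ) ^ ((t : ℕ) + 1)) •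
          φ (Fin.cons c (Fin.contractNth t.castSucc (· * ·) a)) x
      - ((-1 : ℤ) ^ (k + 1)) • (op (a (Fin.last k)) • φ (Fin.cons c (Fin.init a)) x) := by
  rw [hdelM_apply, Fin.sum_univ_succ]
  simp only [Fin.tail_cons, Fin.cons_zero, Fin.castSucc_zero, contractNth_cons_zero,
    ← Fin.succ_castSucc, contractNth_cons_succ, Fin.val_succ, Fin.cons_last, init_cons, pow_succ]
  simp only [Fin.val_zero, mul_neg, mul_one, neg_smul, Finset.sum_neg_distrib]
  abel

theorem hdelM_cons_zero {k : ℕ} (φ : (Fin (k+1) → A) → E → E) (hφ : ∀ b, φ b 0 = 0)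
    (hφ₀ : ∀ b x, φ (Fin.cons 0 b) x = 0) (a : Fin (k+1) → A) (x : E) :
    hdelM (k+1) φ (Fin.cons 0 a) x = 0 := by
  simp [hdelM_cons, hφ, hφ₀]

/-- The faces of `δφ (f y, a) x` other than the first cancel against those of `δ` of the slice
`b ↦ φ (f ·, b) x`; right `A`-linearity of `f` matches `φ (f (y · a₀), …)` with
`φ (f y * a₀, …)`. -/
theorem hdelM_slice_add_hdelM_cons {k : ℕ} (φ : (Fin (k+1) → A) → E → E) (f : E → A)
    (hf : ∀ a y, f (op a • y) = f y * a) (a : Fin (k+1) → A) (x y : E) :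
    hdelM k (fun b z => φ (Fin.cons (f z) b) x) a y + hdelM (k+1) φ (Fin.cons (f y) a) x
      = φ a (op (f y) • x) := by
  rw [hdelM_apply, hdelM_cons, hf]
  abel

theorem hdelM_congr {k : ℕ} {φ ψ : (Fin k → A) → E → E} {b : Fin (k+1) → A} {e : E}
    (h₀ : ∀ c, φ c (op (b 0) • e) = ψ c (op (b 0) • e)) (h : ∀ c, φ c e = ψ c e) :
    hdelM k φ b e = hdelM k ψ b e := by
  simp only [hdelM_apply, h₀, h]

theorem hdelM_finset_sum {k : ℕ} (s : Finset ι) (φ : ι → (Fin k → A) → E → E)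
    (b : Fin (k+1) → A) (e : E) :
    hdelM k (fun c z => ∑ i ∈ s, φ i c z) b e = ∑ i ∈ s, hdelM k (φ i) b e := by
  simp only [hdelM_apply, Finset.smul_sum, Finset.sum_add_distrib]
  rw [Finset.sum_comm]

omit [Module Aᵐᵒᵖ E] in
theorem homM_eq_sum {k : ℕ} (eb : ι → E) (ε : ι → (E →ₗ[K] A)) (φ : (Fin (k+1) → A) → E → E)
    (hφ₀ : ∀ b x, φ (Fin.cons 0 b) x = 0) {s : Finset ι} {z : E}
    (hs : (Function.support fun i => ε i z) ⊆ s) (b : Fin k → A) :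
    homM eb ε k φ b z = ∑ i ∈ s, φ (Fin.cons (ε i z) b) (eb i) := by
  refine finsum_eq_sum_of_support_subset _ fun i hi => hs fun hzero => hi ?_
  simp only [hzero, hφ₀]

theorem hdelM_homM_add_homM_hdelM (eb : ι → E) (ε : ι → (E →ₗ[K] A))
    (hεA : ∀ (i : ι) (a : A) (e : E), ε i (op a • e) = ε i e * a)
    (hfin : ∀ e : E, (Function.support fun i => ε i e).Finite)
    (hdual : ∀ e : E, ∑ᶠ i, op (ε i e) • eb i = e)
    {k : ℕ} (φ : MultilinearMap K (fun _ : Fin (k+1) => A) (E →ₗ[K] E))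
    (a : Fin (k+1) → A) (e : E) :
    hdelM k (homM eb ε k (fun x => ⇑(φ x))) a e
      + homM eb ε (k+1) (hdelM (k+1) (fun x => ⇑(φ x))) a e = φ a e := by
  set s := (hfin e).toFinset
  have hs : (Function.support fun i => ε i e) ⊆ s := by simp [s]
  have hs₀ : (Function.support fun i => ε i (op (a 0) • e)) ⊆ s := by
    intro i hi
    refine hs fun hzero => hi ?_
    simp [hεA, hzero]
  have hφ₀ (b : Fin k → A) (x : E) : φ (Fin.cons 0 b) x = 0 := by
    rw [φ.map_coord_zero 0 (Fin.cons_zero 0 b), LinearMap.zero_apply]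
  have hδφ₀ := hdelM_cons_zero (fun x => ⇑(φ x)) (fun b => map_zero (φ b)) hφ₀
  calc _ = ∑ i ∈ s, (hdelM k (fun b z => φ (Fin.cons (ε i z) b) (eb i)) a e
              + hdelM (k+1) (fun x => ⇑(φ x)) (Fin.cons (ε i e) a) (eb i)) := by
        rw [hdelM_congr (ψ := fun c z => ∑ i ∈ s, φ (Fin.cons (ε i z) c) (eb i))
            (homM_eq_sum eb ε (fun x => ⇑(φ x)) hφ₀ hs₀)
            (homM_eq_sum eb ε (fun x => ⇑(φ x)) hφ₀ hs),
          hdelM_finset_sum, homM_eq_sum eb ε _ hδφ₀ hs, Finset.sum_add_distrib]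
    _ = ∑ i ∈ s, φ a (op (ε i e) • eb i) :=
        Finset.sum_congr rfl fun i _ =>
          hdelM_slice_add_hdelM_cons (fun x => ⇑(φ x)) (ε i) (hεA i) a (eb i) e
    _ = φ a e := by
        rw [← map_sum, ← finsum_eq_sum_of_support_subset _ ?_, hdual]
        exact fun i hi => hs fun hzero => hi (by simp [hzero])

theorem projective_module_homotopy
    (eb : ι → E) (ε : ι → (E →ₗ[K] A))
    (hεA : ∀ (i : ι) (a : A) (e : E), ε i (MulOpposite.op a • e) = ε i e * a)
    (hfin : ∀ e : E, (Function.support fun i => ε i e).Finite)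
    (hdual : ∀ e : E, ∑ᶠ i, MulOpposite.op (ε i e) • eb i = e)
    (k : ℕ) (φ : MultilinearMap K (fun _ : Fin (k+1) => A) (E →ₗ[K] E)) :
    (∀ (a : Fin (k+1) → A) (e : E),
        hdelM k (homM eb ε k (fun x => ⇑(φ x))) a e
          + homM eb ε (k+1) (hdelM (k+1) (fun x => ⇑(φ x))) a e = φ a e)
    ∧ ((∀ (a : Fin (k+2) → A) (e : E), hdelM (k+1) (fun x => ⇑(φ x)) a e = 0) →
        ∀ (a : Fin (k+1) → A) (e : E),
          φ a e = hdelM k (homM eb ε k (fun x => ⇑(φ x))) a e) := by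
  have homotopy := hdelM_homM_add_homM_hdelM eb ε hεA hfin hdual φ
  refine ⟨homotopy, fun hcocycle a e => ?_⟩
  have hδφ : homM eb ε (k+1) (hdelM (k+1) (fun x => ⇑(φ x))) a e = 0 := by
    simp only [homM, hcocycle, finsum_zero]
  rw [← homotopy a e, hδφ, add_zero]

end Stmt14
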